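/- arXiv:2202.02036 — 3 statements merged into one kernel-verified Lean document; each statement's English description precedes it below -/
import Mathlib

section
/- Let f : ℝⁿ → ℝ be convex, differentiable, and L-smooth, with a minimizer x*. Then the gradient descent iterates x_{k+1} = x_k − (1/L)·∇f(x_k) satisfy f(x_k) − f(x*) ≤ (L/(2k))·‖x_0 − x*‖² for all k ≥ 1. -/
/-! By the descent lemma, a step of length `1 / L` lowers `f` by at least
`‖∇f‖² / (2L)`. Together with the first-order convexity bound
`f x - f x* ≤ ⟪∇f x, x - x*⟫` and the expansion of `‖x - ∇f x / L - x*‖²`, this gives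
`f x_{i+1} - f x* ≤ (L/2) (‖x_i - x*‖² - ‖x_{i+1} - x*‖²)`. Summing telescopes, and since
the values `f x_i` decrease, `k (f x_k - f x*) ≤ (L/2) ‖x_0 - x*‖²`. -/

open AffineMap Set
open scoped RealInnerProductSpace

section GradientDescent

variable {E : Type*} [NormedAddCommGroup E] [InnerProductSpace ℝ E] [CompleteSpace E]
  {f : E → ℝ}

lemma HasGradientAt.hasDerivAt_comp_lineMap {g x y : E} {t : ℝ}
    (hf : HasGradientAt f g (lineMap x y t)) :
    HasDerivAt (f ∘ lineMap x y) ⟪g, y - x⟫ t := by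
  simpa using (hasGradientAt_iff_hasFDerivAt.1 hf).comp_hasDerivAt t hasDerivAt_lineMap

lemma ConvexOn.add_inner_le_of_hasGradientAt (hconv : ConvexOn ℝ univ f) {g x : E}
    (hf : HasGradientAt f g x) (y : E) :
    f x + ⟪g, y - x⟫ ≤ f y := by
  have hline : ConvexOn ℝ univ (f ∘ (lineMap x y : ℝ →ᵃ[ℝ] E)) := by
    simpa using hconv.comp_affineMap (lineMap x y : ℝ →ᵃ[ℝ] E)
  have hderiv : HasDerivAt (f ∘ lineMap x y) ⟪g, y - x⟫ (0 : ℝ) :=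
    HasGradientAt.hasDerivAt_comp_lineMap (by rwa [lineMap_apply_zero])
  have := hline.le_slope_of_hasDerivAt (mem_univ 0) (mem_univ 1) zero_lt_one hderiv
  simp only [slope_def_field, Function.comp_apply, lineMap_apply_zero, lineMap_apply_one,
    sub_zero, div_one] at this
  linarith

variable {f' : E → E} {L : ℝ}

lemma le_add_inner_add_of_lipschitz_gradient (hgrad : ∀ x, HasGradientAt f (f' x) x)
    (hlip : ∀ x y, ‖f' x - f' y‖ ≤ L * ‖x - y‖) (x y : E) :
    f y ≤ f x + ⟪f' x, y - x⟫ + L / 2 * ‖y - x‖ ^ 2 := by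
  -- Along the segment, the Lipschitz bound makes `f` minus its quadratic upper model
  -- nonincreasing.
  set φ : ℝ → ℝ := fun t =>
    f (lineMap x y t) - t * ⟪f' x, y - x⟫ - L / 2 * t ^ 2 * ‖y - x‖ ^ 2
  have hφ : ∀ t, HasDerivAt φ
      (⟪f' (lineMap x y t), y - x⟫ - ⟪f' x, y - x⟫ - L * t * ‖y - x‖ ^ 2) t := by
    intro t
    refine ((((hgrad _).hasDerivAt_comp_lineMap (x := x) (y := y) (t := t)).sub
      ((hasDerivAt_id t).mul_const ⟪f' x, y - x⟫)).sub
      (((hasDerivAt_pow 2 t).const_mul (L / 2)).mul_const (‖y - x‖ ^ 2))).congr_deriv ?_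
    ring
  have hφ_nonpos : ∀ t ∈ interior (Ici (0 : ℝ)),
      ⟪f' (lineMap x y t), y - x⟫ - ⟪f' x, y - x⟫ - L * t * ‖y - x‖ ^ 2 ≤ 0 := by
    intro t ht
    rw [interior_Ici, mem_Ioi] at ht
    rw [sub_nonpos]
    have hdist : ‖lineMap x y t - x‖ = t * ‖y - x‖ := by
      rw [← dist_eq_norm, dist_lineMap_left, Real.norm_of_nonneg ht.le, dist_comm, dist_eq_norm]
    calc ⟪f' (lineMap x y t), y - x⟫ - ⟪f' x, y - x⟫
        = ⟪f' (lineMap x y t) - f' x, y - x⟫ := (inner_sub_left _ _ _).symm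
      _ ≤ ‖f' (lineMap x y t) - f' x‖ * ‖y - x‖ := real_inner_le_norm _ _
      _ ≤ L * ‖lineMap x y t - x‖ * ‖y - x‖ := by gcongr; exact hlip _ _
      _ = L * t * ‖y - x‖ ^ 2 := by rw [hdist]; ring
  have hanti : AntitoneOn φ (Ici 0) :=
    antitoneOn_of_hasDerivWithinAt_nonpos (convex_Ici 0)
      (fun t _ => (hφ t).continuousAt.continuousWithinAt)
      (fun t _ => (hφ t).hasDerivWithinAt) hφ_nonpos
  have := hanti self_mem_Ici (mem_Ici.2 zero_le_one) zero_le_one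
  simp only [φ, lineMap_apply_zero, lineMap_apply_one] at this
  linarith

lemma apply_gradient_step_le (hgrad : ∀ x, HasGradientAt f (f' x) x) (hL : 0 < L)
    (hlip : ∀ x y, ‖f' x - f' y‖ ≤ L * ‖x - y‖) (x : E) :
    f (x - (1 / L) • f' x) ≤ f x - 1 / (2 * L) * ‖f' x‖ ^ 2 := by
  have hdesc := le_add_inner_add_of_lipschitz_gradient hgrad hlip x (x - (1 / L) • f' x)
  rw [sub_sub_cancel_left, inner_neg_right, real_inner_smul_right, real_inner_self_eq_norm_sq,
    norm_neg, norm_smul, Real.norm_of_nonneg (by positivity)] at hdesc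
  calc f (x - (1 / L) • f' x)
      ≤ f x + -(1 / L * ‖f' x‖ ^ 2) + L / 2 * (1 / L * ‖f' x‖) ^ 2 := hdesc
    _ = f x - 1 / (2 * L) * ‖f' x‖ ^ 2 := by field_simp; ring

lemma apply_gradient_step_sub_le (hgrad : ∀ x, HasGradientAt f (f' x) x)
    (hconv : ConvexOn ℝ univ f) (hL : 0 < L) (hlip : ∀ x y, ‖f' x - f' y‖ ≤ L * ‖x - y‖)
    (x z : E) :
    f (x - (1 / L) • f' x) - f z ≤
      L / 2 * (‖x - z‖ ^ 2 - ‖x - (1 / L) • f' x - z‖ ^ 2) := by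
  have hdecr := apply_gradient_step_le hgrad hL hlip x
  have hsupp := hconv.add_inner_le_of_hasGradientAt (hgrad x) z
  have hdist : ‖x - (1 / L) • f' x - z‖ ^ 2 =
      ‖x - z‖ ^ 2 - 2 * (1 / L) * ⟪f' x, x - z⟫ + (1 / L) ^ 2 * ‖f' x‖ ^ 2 := by
    rw [sub_right_comm, norm_sub_sq_real, real_inner_smul_right, real_inner_comm, norm_smul,
      Real.norm_of_nonneg (by positivity)]
    ring
  have hinner : ⟪f' x, z - x⟫ = -⟪f' x, x - z⟫ := by rw [← inner_neg_right, neg_sub]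
  have hdrop : L / 2 * (‖x - z‖ ^ 2 - ‖x - (1 / L) • f' x - z‖ ^ 2) =
      ⟪f' x, x - z⟫ - 1 / (2 * L) * ‖f' x‖ ^ 2 := by
    rw [hdist]; field_simp; ring
  linarith

end GradientDescent

lemma nat_mul_le_of_antitone_of_le_sub_succ {a D : ℕ → ℝ} (ha : Antitone a)
    (hD : ∀ i, 0 ≤ D i) (h : ∀ i, a (i + 1) ≤ D i - D (i + 1)) (k : ℕ) :
    k * a k ≤ D 0 :=
  calc k * a k = ∑ _i ∈ Finset.range k, a k := by simp
    _ ≤ ∑ i ∈ Finset.range k, a (i + 1) :=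
        Finset.sum_le_sum fun i hi => ha (Finset.mem_range.1 hi)
    _ ≤ ∑ i ∈ Finset.range k, (D i - D (i + 1)) := Finset.sum_le_sum fun i _ => h i
    _ = D 0 - D k := Finset.sum_range_sub' D k
    _ ≤ D 0 := sub_le_self _ (hD k)

theorem stmt_7_general (n : ℕ) (f : EuclideanSpace ℝ (Fin n) → ℝ)
    (f' : EuclideanSpace ℝ (Fin n) → EuclideanSpace ℝ (Fin n))
    (hgrad : ∀ x, HasGradientAt f (f' x) x)
    (hconv : ConvexOn ℝ Set.univ f)
    (L : ℝ) (hL : 0 < L) (hlip : ∀ x y, ‖f' x - f' y‖ ≤ L * ‖x - y‖)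
    (xstar : EuclideanSpace ℝ (Fin n))
    (x : ℕ → EuclideanSpace ℝ (Fin n))
    (hx : ∀ k, x (k + 1) = x k - (1 / L) • f' (x k)) :
    ∀ k : ℕ, 1 ≤ k → f (x k) - f xstar ≤ L / (2 * k) * ‖x 0 - xstar‖ ^ 2 := by
  intro k hk
  have hanti : Antitone fun i => f (x i) - f xstar := by
    refine antitone_nat_of_succ_le fun i => ?_
    have hstep := apply_gradient_step_le hgrad hL hlip (x i)
    have hdecrease : 0 ≤ 1 / (2 * L) * ‖f' (x i)‖ ^ 2 := by positivity
    rw [hx]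
    linarith
  have hbound := nat_mul_le_of_antitone_of_le_sub_succ hanti
    (D := fun i => L / 2 * ‖x i - xstar‖ ^ 2) (fun i => by positivity)
    (fun i => by rw [hx, ← mul_sub]; exact apply_gradient_step_sub_le hgrad hconv hL hlip _ _) k
  rw [div_mul_eq_mul_div, le_div_iff₀ (by positivity)]
  linarith

theorem stmt_7 (n : ℕ) (f : EuclideanSpace ℝ (Fin n) → ℝ)
    (f' : EuclideanSpace ℝ (Fin n) → EuclideanSpace ℝ (Fin n))
    (hgrad : ∀ x, HasGradientAt f (f' x) x)
    (hconv : ConvexOn ℝ Set.univ f)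
    (L : ℝ) (hL : 0 < L) (hlip : ∀ x y, ‖f' x - f' y‖ ≤ L * ‖x - y‖)
    (xstar : EuclideanSpace ℝ (Fin n)) (hmin : ∀ y, f xstar ≤ f y)
    (x : ℕ → EuclideanSpace ℝ (Fin n))
    (hx : ∀ k, x (k + 1) = x k - (1 / L) • f' (x k)) :
    ∀ k : ℕ, 1 ≤ k → f (x k) - f xstar ≤ L / (2 * k) * ‖x 0 - xstar‖ ^ 2 :=
  stmt_7_general n f f' hgrad hconv L hL hlip xstar x hx
end

section
/- Let f : ℝⁿ → ℝ be μ-strongly convex, differentiable, and L-smooth with minimizer x*, and let 0 < s ≤ 1/L with μs ≤ 1. Then the gradient descent iterates x_{k+1} = x_k − s·∇f(x_k) satisfy f(x_{k+1}) − f(x*) + (μ/2)‖x_{k+1} − x*‖² ≤ (1 − μs)·(f(x_k) − f(x*) + (μ/2)‖x_k − x*‖²) for all k ≥ 0. -/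
/-!
Strong convexity at `x` gives `⟪∇f x, x - x⋆⟫ ≥ f x - f x⋆ + μ/2 ‖x - x⋆‖²`, and `L`-smoothness
with `L s ≤ 1` gives the sufficient decrease `f (x - s ∇f x) ≤ f x - s/2 ‖∇f x‖²`. Expanding
`‖x - s ∇f x - x⋆‖²` and multiplying the first inequality by `μ s`, the potential
`f - f x⋆ + μ/2 ‖· - x⋆‖²` contracts by `1 - μ s`, up to the slack `s/2 (1 - μ s) ‖∇f x‖² ≥ 0`.
-/

open Set InnerProductSpace RealInnerProductSpace

theorem ConvexOn.add_le_of_hasFDerivAt {F : Type*} [NormedAddCommGroup F] [NormedSpace ℝ F]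
    {s : Set F} {f : F → ℝ} {f' : F →L[ℝ] ℝ} {x y : F} (hf : ConvexOn ℝ s f)
    (hx : x ∈ s) (hy : y ∈ s) (hderiv : HasFDerivAt f f' x) :
    f x + f' (y - x) ≤ f y := by
  have hline := hf.comp_affineMap (AffineMap.lineMap (k := ℝ) x y)
  have hderiv_line : HasDerivAt (f ∘ AffineMap.lineMap x y) (f' (y - x)) (0 : ℝ) :=
    (by simpa using hderiv : HasFDerivAt f f' (AffineMap.lineMap x y (0 : ℝ))).comp_hasDerivAt 0
      AffineMap.hasDerivAt_lineMap
  have := hline.le_slope_of_hasDerivAt (by simpa) (by simpa) one_pos hderiv_line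
  rwa [slope_def_field, sub_zero, div_one, Function.comp_apply, Function.comp_apply,
    AffineMap.lineMap_apply_one, AffineMap.lineMap_apply_zero, le_sub_iff_add_le'] at this

variable {E : Type*} [NormedAddCommGroup E] [InnerProductSpace ℝ E] [CompleteSpace E]

theorem le_add_inner_add_sq_of_lipschitz_gradient {f : E → ℝ} {f' : E → E} {L : ℝ}
    (hgrad : ∀ x, HasGradientAt f (f' x) x) (hlip : ∀ x y, ‖f' x - f' y‖ ≤ L * ‖x - y‖)
    (x y : E) : f y ≤ f x + ⟪f' x, y - x⟫ + L / 2 * ‖y - x‖ ^ 2 := by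
  set v := y - x
  -- `ψ` is nonincreasing on `[0, 1]`: the Lipschitz bound caps the growth of `t ↦ f (x + t • v)`.
  let ψ : ℝ → ℝ := fun t ↦ f (x + t • v) - t * ⟪f' x, v⟫ - L / 2 * t ^ 2 * ‖v‖ ^ 2
  have hψ : ∀ t, HasDerivAt ψ (⟪f' (x + t • v), v⟫ - ⟪f' x, v⟫ - L * t * ‖v‖ ^ 2) t := by
    intro t
    have hline : HasDerivAt (fun t : ℝ ↦ x + t • v) v t := by
      simpa using ((hasDerivAt_id t).smul_const v).const_add x
    have hf := (hgrad (x + t • v)).hasFDerivAt.comp_hasDerivAt t hline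
    simp only [toDual_apply_apply] at hf
    refine ((hf.sub ((hasDerivAt_id t).mul_const ⟪f' x, v⟫)).sub
      (((hasDerivAt_pow 2 t).const_mul (L / 2)).mul_const (‖v‖ ^ 2))).congr_deriv ?_
    simp only [Nat.cast_ofNat, Nat.add_one_sub_one, pow_one]
    ring
  have hψ_nonpos : ∀ t ∈ interior (Icc (0 : ℝ) 1),
      ⟪f' (x + t • v), v⟫ - ⟪f' x, v⟫ - L * t * ‖v‖ ^ 2 ≤ 0 := by
    intro t ht
    rw [interior_Icc] at ht
    rw [sub_nonpos]
    have hnorm : ‖f' (x + t • v) - f' x‖ ≤ L * (t * ‖v‖) := by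
      simpa [norm_smul, abs_of_pos ht.1] using hlip (x + t • v) x
    calc ⟪f' (x + t • v), v⟫ - ⟪f' x, v⟫ = ⟪f' (x + t • v) - f' x, v⟫ := (inner_sub_left ..).symm
      _ ≤ ‖f' (x + t • v) - f' x‖ * ‖v‖ := real_inner_le_norm _ _
      _ ≤ L * (t * ‖v‖) * ‖v‖ := by gcongr
      _ = L * t * ‖v‖ ^ 2 := by ring
  have hanti : AntitoneOn ψ (Icc 0 1) :=
    antitoneOn_of_hasDerivWithinAt_nonpos (convex_Icc 0 1)
      (fun t _ ↦ (hψ t).continuousAt.continuousWithinAt)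
      (fun t _ ↦ (hψ t).hasDerivWithinAt) hψ_nonpos
  have h01 : ψ 1 ≤ ψ 0 :=
    hanti (left_mem_Icc.2 zero_le_one) (right_mem_Icc.2 zero_le_one) zero_le_one
  simp only [ψ, one_smul, zero_smul, add_zero, v, add_sub_cancel] at h01
  linarith

theorem StrongConvexOn.add_inner_add_le_of_hasGradientAt {s : Set E} {f : E → ℝ} {μ : ℝ}
    {g x y : E} (hf : StrongConvexOn s μ f) (hx : x ∈ s) (hy : y ∈ s)
    (hgrad : HasGradientAt f g x) :
    f x + ⟪g, y - x⟫ + μ / 2 * ‖y - x‖ ^ 2 ≤ f y := by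
  have hderiv : HasFDerivAt (fun z ↦ f z - μ / 2 * ‖z‖ ^ 2)
      (toDual ℝ E g - (μ / 2) • 2 • innerSL ℝ x) x :=
    hgrad.hasFDerivAt.sub ((hasStrictFDerivAt_norm_sq x).hasFDerivAt.const_mul (μ / 2))
  have := (strongConvexOn_iff_convex.1 hf).add_le_of_hasFDerivAt hx hy hderiv
  have hnorm : ‖y‖ ^ 2 = ‖x‖ ^ 2 + 2 * ⟪x, y - x⟫ + ‖y - x‖ ^ 2 := by
    rw [← norm_add_sq_real, add_sub_cancel]
  simp only [sub_apply, toDual_apply_apply, smul_apply, nsmul_eq_mul, Nat.cast_ofNat,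
    innerSL_apply_apply, smul_eq_mul] at this
  rw [hnorm] at this
  linarith

theorem apply_sub_smul_gradient_le {f : E → ℝ} {f' : E → E} {L s : ℝ}
    (hgrad : ∀ x, HasGradientAt f (f' x) x) (hlip : ∀ x y, ‖f' x - f' y‖ ≤ L * ‖x - y‖)
    (hs : 0 ≤ s) (hLs : L * s ≤ 1) (x : E) :
    f (x - s • f' x) ≤ f x - s / 2 * ‖f' x‖ ^ 2 := by
  have h := le_add_inner_add_sq_of_lipschitz_gradient hgrad hlip x (x - s • f' x)
  rw [sub_sub_cancel_left, inner_neg_right, real_inner_smul_right, real_inner_self_eq_norm_sq,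
    norm_neg, norm_smul, Real.norm_of_nonneg hs] at h
  nlinarith [mul_nonneg hs (sq_nonneg ‖f' x‖)]

theorem potential_sub_smul_gradient_le {f : E → ℝ} {f' : E → E} {μ L s : ℝ}
    (hgrad : ∀ x, HasGradientAt f (f' x) x) (hsc : StrongConvexOn univ μ f) (hμ : 0 ≤ μ)
    (hlip : ∀ x y, ‖f' x - f' y‖ ≤ L * ‖x - y‖) (hs : 0 ≤ s) (hLs : L * s ≤ 1)
    (hμs : μ * s ≤ 1) (xstar x : E) :
    f (x - s • f' x) - f xstar + μ / 2 * ‖x - s • f' x - xstar‖ ^ 2 ≤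
      (1 - μ * s) * (f x - f xstar + μ / 2 * ‖x - xstar‖ ^ 2) := by
  have hdescent := apply_sub_smul_gradient_le hgrad hlip hs hLs x
  have hconvex : f x - f xstar + μ / 2 * ‖x - xstar‖ ^ 2 ≤ ⟪f' x, x - xstar⟫ := by
    have := hsc.add_inner_add_le_of_hasGradientAt (mem_univ x) (mem_univ xstar) (hgrad x)
    rw [← neg_sub x xstar, inner_neg_right, norm_neg] at this
    linarith
  have hdist : ‖x - s • f' x - xstar‖ ^ 2 =
      ‖x - xstar‖ ^ 2 - 2 * s * ⟪f' x, x - xstar⟫ + s ^ 2 * ‖f' x‖ ^ 2 := by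
    rw [sub_right_comm, norm_sub_sq_real, real_inner_smul_right, real_inner_comm, norm_smul,
      Real.norm_of_nonneg hs]
    ring
  rw [hdist]
  nlinarith [mul_le_mul_of_nonneg_left hconvex (mul_nonneg hμ hs),
    mul_nonneg (mul_nonneg hs (sub_nonneg.2 hμs)) (sq_nonneg ‖f' x‖)]

theorem stmt_8_general (n : ℕ) (f : EuclideanSpace ℝ (Fin n) → ℝ)
    (f' : EuclideanSpace ℝ (Fin n) → EuclideanSpace ℝ (Fin n))
    (hgrad : ∀ x, HasGradientAt f (f' x) x)
    (μ : ℝ) (hμ : 0 < μ) (hsc : StrongConvexOn Set.univ μ f)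
    (L : ℝ) (hlip : ∀ x y, ‖f' x - f' y‖ ≤ L * ‖x - y‖)
    (xstar : EuclideanSpace ℝ (Fin n))
    (s : ℝ) (hs0 : 0 < s) (hsL : s ≤ 1 / L) (hμs : μ * s ≤ 1)
    (x : ℕ → EuclideanSpace ℝ (Fin n))
    (hx : ∀ k, x (k + 1) = x k - s • f' (x k)) :
    ∀ k : ℕ,
      f (x (k + 1)) - f xstar + μ / 2 * ‖x (k + 1) - xstar‖ ^ 2 ≤
        (1 - μ * s) * (f (x k) - f xstar + μ / 2 * ‖x k - xstar‖ ^ 2) := by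
  have hL : 0 < L := by
    by_contra! hL
    linarith [one_div_nonpos.2 hL]
  have hLs : L * s ≤ 1 := by rwa [le_div_iff₀ hL, mul_comm] at hsL
  intro k
  rw [hx k]
  exact potential_sub_smul_gradient_le hgrad hsc hμ.le hlip hs0.le hLs hμs xstar (x k)

theorem stmt_8 (n : ℕ) (f : EuclideanSpace ℝ (Fin n) → ℝ)
    (f' : EuclideanSpace ℝ (Fin n) → EuclideanSpace ℝ (Fin n))
    (hgrad : ∀ x, HasGradientAt f (f' x) x)
    (μ : ℝ) (hμ : 0 < μ) (hsc : StrongConvexOn Set.univ μ f)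
    (L : ℝ) (hlip : ∀ x y, ‖f' x - f' y‖ ≤ L * ‖x - y‖)
    (xstar : EuclideanSpace ℝ (Fin n)) (hmin : ∀ y, f xstar ≤ f y)
    (s : ℝ) (hs0 : 0 < s) (hsL : s ≤ 1 / L) (hμs : μ * s ≤ 1)
    (x : ℕ → EuclideanSpace ℝ (Fin n))
    (hx : ∀ k, x (k + 1) = x k - s • f' (x k)) :
    ∀ k : ℕ,
      f (x (k + 1)) - f xstar + μ / 2 * ‖x (k + 1) - xstar‖ ^ 2 ≤
        (1 - μ * s) * (f (x k) - f xstar + μ / 2 * ‖x k - xstar‖ ^ 2) :=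
  stmt_8_general n f f' hgrad μ hμ hsc L hlip xstar s hs0 hsL hμs x hx
end

section
/- Let f : ℝⁿ → ℝ be μ-strongly convex, differentiable, and L-smooth with minimizer x*. Let ξ ≥ 1, 0 < s ≤ 1/L, q = μs with √(ξq) < 1. Consider the iteration y_k = x_k + (√(ξq)/(1+√(ξq)))·(z_k − x_k), x_{k+1} = y_k − s·∇f(y_k), z_{k+1} = (1 − √(q/ξ))·z_k + √(q/ξ)·(y_k − (1/μ)·∇f(y_k)), started from x_0 = z_0. Define φ_k = (1 − √(q/ξ))^{−k}·(f(x_k) − f(x*) + (ξμ/2)‖z_k − x*‖²). Then φ_{k+1} ≤ φ_k for all k ≥ 0. -/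
open RealInnerProductSpace Filter

set_option linter.unusedSectionVars false
set_option linter.unusedVariables false
set_option maxHeartbeats 1000000

section Aux

variable {E : Type*} [NormedAddCommGroup E] [InnerProductSpace ℝ E] [CompleteSpace E]

lemma hasDerivAt_line (f : E → ℝ) (g : E) (p v : E) (τ : ℝ)
    (h : HasGradientAt f g (p + τ • v)) :
    HasDerivAt (fun r : ℝ => f (p + r • v)) ⟪g, v⟫ τ := by
  have hf : HasFDerivAt f (InnerProductSpace.toDual ℝ E g) (p + τ • v) :=
    hasGradientAt_iff_hasFDerivAt.mp h
  have hp : HasDerivAt (fun r : ℝ => p + r • v) v τ := by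
    simpa using ((hasDerivAt_id τ).smul_const v).const_add p
  have h2 := hf.comp_hasDerivAt τ hp
  simp at h2
  exact h2

lemma norm_three (a b c : ℝ) (p q r : E) :
    ‖a • p + b • q + c • r‖ ^ 2 =
      a ^ 2 * ‖p‖ ^ 2 + b ^ 2 * ‖q‖ ^ 2 + c ^ 2 * ‖r‖ ^ 2 +
        2 * a * b * ⟪p, q⟫ + 2 * a * c * ⟪p, r⟫ + 2 * b * c * ⟪q, r⟫ := by
  rw [← real_inner_self_eq_norm_sq, ← real_inner_self_eq_norm_sq,
    ← real_inner_self_eq_norm_sq, ← real_inner_self_eq_norm_sq]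
  simp only [inner_add_left, inner_add_right, real_inner_smul_left, real_inner_smul_right,
    real_inner_comm q p, real_inner_comm r p, real_inner_comm r q]
  ring

lemma smooth_upper (f : E → ℝ) (f' : E → E) (hgrad : ∀ x, HasGradientAt f (f' x) x)
    (L : ℝ) (hlip : ∀ x y, ‖f' x - f' y‖ ≤ L * ‖x - y‖) (x y : E) :
    f y ≤ f x + ⟪f' x, y - x⟫ + L / 2 * ‖y - x‖ ^ 2 := by
  set v := y - x with hv
  set c : ℝ := ⟪f' x, v⟫ with hc
  set d : ℝ := L / 2 * ‖v‖ ^ 2 with hd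
  set ψ : ℝ → ℝ := fun r => f (x + r • v) - r * c - r ^ 2 * d with hψ
  have hder : ∀ r : ℝ, HasDerivAt ψ (⟪f' (x + r • v), v⟫ - c - 2 * r * d) r := by
    intro r
    have h1 := hasDerivAt_line f (f' (x + r • v)) x v r (hgrad _)
    have h2 : HasDerivAt (fun r : ℝ => r * c) c r := by
      simpa using (hasDerivAt_id r).mul_const c
    have h3 : HasDerivAt (fun r : ℝ => r ^ 2 * d) (2 * r * d) r := by
      have := ((hasDerivAt_pow 2 r)).mul_const d
      simpa [mul_comm, mul_assoc, mul_left_comm] using this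
    exact (h1.sub h2).sub h3
  have hanti : AntitoneOn ψ (Set.Icc 0 1) := by
    apply antitoneOn_of_deriv_nonpos (convex_Icc 0 1)
    · exact fun r _ => ((hder r).continuousAt).continuousWithinAt
    · intro r _
      exact ((hder r).differentiableAt).differentiableWithinAt
    · intro r hr
      rw [interior_Icc] at hr
      rw [(hder r).deriv]
      have hineq : ⟪f' (x + r • v) - f' x, v⟫ ≤ ‖f' (x + r • v) - f' x‖ * ‖v‖ :=
        real_inner_le_norm _ _
      have hlips : ‖f' (x + r • v) - f' x‖ ≤ L * (r * ‖v‖) := by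
        have := hlip (x + r • v) x
        simpa [norm_smul, abs_of_nonneg hr.1.le, mul_assoc] using this
      have hvn : (0:ℝ) ≤ ‖v‖ := norm_nonneg _
      have : ⟪f' (x + r • v), v⟫ - c ≤ L * r * ‖v‖ ^ 2 := by
        have h4 : ⟪f' (x + r • v), v⟫ - c = ⟪f' (x + r • v) - f' x, v⟫ := by
          rw [hc, inner_sub_left]
        rw [h4]
        calc ⟪f' (x + r • v) - f' x, v⟫ ≤ ‖f' (x + r • v) - f' x‖ * ‖v‖ := hineq
          _ ≤ L * (r * ‖v‖) * ‖v‖ := by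
              apply mul_le_mul_of_nonneg_right hlips hvn
          _ = L * r * ‖v‖ ^ 2 := by ring
      rw [hd]
      nlinarith [this]
  have h01 : ψ 1 ≤ ψ 0 := hanti (by norm_num) (by norm_num) (by norm_num)
  have e1 : x + (1:ℝ) • v = y := by rw [hv]; simp
  have e0 : x + (0:ℝ) • v = x := by simp
  simp only [hψ, e1, e0, one_mul, one_pow, zero_mul, pow_two, mul_zero, sub_zero,
    zero_pow, zero_mul] at h01
  rw [hc, hd] at h01
  linarith [h01]

lemma strong_lower (f : E → ℝ) (μ : ℝ) (hsc : StrongConvexOn Set.univ μ f)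
    (g x y : E) (hg : HasGradientAt f g x) :
    f x + ⟪g, y - x⟫ + μ / 2 * ‖y - x‖ ^ 2 ≤ f y := by
  set v := y - x with hv
  set φ : ℝ → ℝ := fun r => f (x + r • v) with hφ
  have hd : HasDerivAt φ ⟪g, v⟫ 0 := by
    apply hasDerivAt_line f g x v 0
    simpa using hg
  have hslope : ∀ t : ℝ, t ∈ Set.Ioo (0:ℝ) 1 →
      (φ t - φ 0) / t ≤ f y - f x - (1 - t) * (μ / 2 * ‖v‖ ^ 2) := by
    intro t ht
    have hsc2 := hsc.2 (Set.mem_univ y) (Set.mem_univ x) ht.1.le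
      (by linarith [ht.2] : (0:ℝ) ≤ 1 - t) (by ring)
    have hpt : t • y + (1 - t) • x = x + t • v := by
      rw [hv]; module
    rw [hpt, smul_eq_mul, smul_eq_mul] at hsc2
    have hφ0 : φ 0 = f x := by simp [hφ]
    have hφt : φ t = f (x + t • v) := rfl
    rw [div_le_iff₀ ht.1]
    have hyx : ‖y - x‖ = ‖v‖ := by rw [hv]
    rw [hφt, hφ0]
    calc f (x + t • v) - f x
        ≤ t * f y + (1 - t) * f x - t * (1 - t) * (μ / 2 * ‖y - x‖ ^ 2) - f x := by
          linarith [hsc2]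
      _ = (f y - f x - (1 - t) * (μ / 2 * ‖v‖ ^ 2)) * t := by rw [hyx]; ring
  have htend1 : Tendsto (fun t : ℝ => (φ t - φ 0) / t) (nhdsWithin 0 (Set.Ioi 0))
      (nhds ⟪g, v⟫) := by
    have h0 := hasDerivAt_iff_tendsto_slope.mp hd
    have h2 : Tendsto (slope φ 0) (nhdsWithin 0 (Set.Ioi 0)) (nhds ⟪g, v⟫) :=
      h0.mono_left (nhdsWithin_mono 0 (fun t ht => by simpa using (ne_of_gt ht)))
    apply h2.congr
    intro t
    simp [slope_def_field, div_eq_inv_mul]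
  have htend2 : Tendsto (fun t : ℝ => f y - f x - (1 - t) * (μ / 2 * ‖v‖ ^ 2))
      (nhdsWithin 0 (Set.Ioi 0)) (nhds (f y - f x - μ / 2 * ‖v‖ ^ 2)) := by
    have : Tendsto (fun t : ℝ => f y - f x - (1 - t) * (μ / 2 * ‖v‖ ^ 2)) (nhds 0)
        (nhds (f y - f x - (1 - 0) * (μ / 2 * ‖v‖ ^ 2))) := by
      apply Continuous.tendsto
      continuity
    simpa using this.mono_left nhdsWithin_le_nhds
  have hineq : ⟪g, v⟫ ≤ f y - f x - μ / 2 * ‖v‖ ^ 2 := by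
    refine le_of_tendsto_of_tendsto htend1 htend2 ?_
    filter_upwards [Ioo_mem_nhdsGT_of_mem (by norm_num : (0:ℝ) ∈ Set.Ico (0:ℝ) 1)] with t ht
    exact hslope t ht
  linarith [hineq]

lemma key_scalar (σ ξ μ s fX fY fS fX1 W V P Qg R G Zp : ℝ)
    (hσ0 : 0 ≤ σ) (h1σ : 0 ≤ 1 - σ) (hξ1 : 1 ≤ ξ) (hμ : 0 < μ)
    (hμs : μ * s = ξ * σ ^ 2)
    (hA : fX1 ≤ fY - s / 2 * G)
    (hB : fY + (ξ * σ) * (R - Qg) + μ / 2 * ((ξ * σ) ^ 2 * (V - 2 * P + W)) ≤ fX)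
    (hC : fY - R + μ / 2 * V ≤ fS)
    (hE : fS ≤ fY)
    (hWPV : 0 ≤ W - 2 * P + V)
    (hZp : Zp = (1 - σ) ^ 2 * W + σ ^ 2 * V + (σ / μ) ^ 2 * G + 2 * (1 - σ) * σ * P
      - 2 * (1 - σ) * (σ / μ) * Qg - 2 * σ * (σ / μ) * R) :
    fX1 - fS + ξ * μ / 2 * Zp ≤ (1 - σ) * (fX - fS + ξ * μ / 2 * W) := by
  have hσt : σ ≤ ξ * σ := by nlinarith
  have d1 : 0 ≤ fY - s / 2 * G - fX1 := by linarith
  have d2 : 0 ≤ (1 - σ) * (fX - fY - (ξ * σ) * (R - Qg)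
      - μ / 2 * ((ξ * σ) ^ 2 * (V - 2 * P + W))) := mul_nonneg h1σ (by linarith)
  have d3 : 0 ≤ σ * (fS - fY + R - μ / 2 * V) := mul_nonneg hσ0 (by linarith)
  have d4 : 0 ≤ (ξ * σ - σ) * (fS - fY + R - μ / 2 * V) :=
    mul_nonneg (by linarith) (by linarith)
  have d6 : 0 ≤ (ξ * σ - σ) * (fY - fS) := mul_nonneg (by linarith) (by linarith)
  have d5 : 0 ≤ (1 - σ) * (μ / 2) * ((ξ * σ) ^ 2 + ξ * σ) * (W - 2 * P + V) := by
    apply mul_nonneg _ hWPV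
    apply mul_nonneg (mul_nonneg h1σ (by linarith)) (by nlinarith)
  have hEq : (1 - σ) * (fX - fS + ξ * μ / 2 * W) - (fX1 - fS + ξ * μ / 2 * Zp) =
      (fY - s / 2 * G - fX1)
      + (1 - σ) * (fX - fY - (ξ * σ) * (R - Qg) - μ / 2 * ((ξ * σ) ^ 2 * (V - 2 * P + W)))
      + σ * (fS - fY + R - μ / 2 * V)
      + (ξ * σ - σ) * (fS - fY + R - μ / 2 * V)
      + (ξ * σ - σ) * (fY - fS)
      + (1 - σ) * (μ / 2) * ((ξ * σ) ^ 2 + ξ * σ) * (W - 2 * P + V) := by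
    rw [hZp]
    field_simp
    linear_combination G * hμs
  linarith [d1, d2, d3, d4, d6, d5, hEq]

end Aux

theorem stmt_10 (n : ℕ) (f : EuclideanSpace ℝ (Fin n) → ℝ)
    (f' : EuclideanSpace ℝ (Fin n) → EuclideanSpace ℝ (Fin n))
    (hgrad : ∀ x, HasGradientAt f (f' x) x)
    (μ : ℝ) (hμ : 0 < μ) (hsc : StrongConvexOn Set.univ μ f)
    (L : ℝ) (hlip : ∀ x y, ‖f' x - f' y‖ ≤ L * ‖x - y‖)
    (xstar : EuclideanSpace ℝ (Fin n)) (hmin : ∀ y, f xstar ≤ f y)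
    (ξ : ℝ) (hξ : 1 ≤ ξ)
    (s : ℝ) (hs0 : 0 < s) (hsL : s ≤ 1 / L)
    (q : ℝ) (hq : q = μ * s) (hξq : Real.sqrt (ξ * q) < 1)
    (x y z : ℕ → EuclideanSpace ℝ (Fin n))
    (hinit : x 0 = z 0)
    (hy : ∀ k, y k = x k + (Real.sqrt (ξ * q) / (1 + Real.sqrt (ξ * q))) • (z k - x k))
    (hx : ∀ k, x (k + 1) = y k - s • f' (y k))
    (hz : ∀ k, z (k + 1) =
      (1 - Real.sqrt (q / ξ)) • z k + Real.sqrt (q / ξ) • (y k - (1 / μ) • f' (y k)))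
    (φ : ℕ → ℝ)
    (hφ : ∀ k : ℕ, φ k =
      (1 - Real.sqrt (q / ξ)) ^ (-(k : ℤ)) *
        (f (x k) - f xstar + ξ * μ / 2 * ‖z k - xstar‖ ^ 2)) :
    ∀ k, φ (k + 1) ≤ φ k := by
  have hξ0 : (0:ℝ) < ξ := by linarith
  have hq0 : 0 < q := by rw [hq]; positivity
  have hL : 0 < L := by
    by_contra h
    push_neg at h
    have : 1 / L ≤ 0 := one_div_nonpos.mpr h
    linarith
  have hLs : L * s ≤ 1 := by
    rw [le_div_iff₀ hL] at hsL
    linarith [hsL]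
  set t : ℝ := Real.sqrt (ξ * q) with htdef
  set σ : ℝ := Real.sqrt (q / ξ) with hσdef
  have ht0 : 0 ≤ t := Real.sqrt_nonneg _
  have hσ0 : 0 ≤ σ := Real.sqrt_nonneg _
  have hξσ : ξ * σ = t := by
    rw [hσdef, htdef]
    rw [show ξ = Real.sqrt (ξ ^ 2) by rw [Real.sqrt_sq hξ0.le]]
    rw [← Real.sqrt_mul (by positivity)]
    congr 1
    rw [Real.sqrt_sq hξ0.le]
    field_simp
  have hσsq : σ ^ 2 = q / ξ := Real.sq_sqrt (by positivity)
  have hμs' : μ * s = ξ * σ ^ 2 := by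
    rw [hσsq]
    field_simp
    linarith [hq]
  have hσt : σ ≤ t := by
    rw [hσdef, htdef]
    apply Real.sqrt_le_sqrt
    rw [div_le_iff₀ hξ0]
    nlinarith [mul_nonneg hq0.le (mul_nonneg (sub_nonneg.mpr hξ) (by linarith : (0:ℝ) ≤ ξ + 1))]
  have hσ1 : σ < 1 := lt_of_le_of_lt hσt hξq
  have h1σ : (0:ℝ) < 1 - σ := by linarith
  have h1t : (0:ℝ) < 1 + t := by linarith
  have h1t' : (1:ℝ) + t ≠ 0 := ne_of_gt h1t
  intro k
  set w : EuclideanSpace ℝ (Fin n) := z k - xstar with hwdef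
  set v : EuclideanSpace ℝ (Fin n) := y k - xstar with hvdef
  set g : EuclideanSpace ℝ (Fin n) := f' (y k) with hgdef
  set W : ℝ := ‖w‖ ^ 2 with hWdef
  set V : ℝ := ‖v‖ ^ 2 with hVdef
  set P : ℝ := ⟪w, v⟫ with hPdef
  set Qg : ℝ := ⟪w, g⟫ with hQdef
  set R : ℝ := ⟪v, g⟫ with hRdef
  set G : ℝ := ‖g‖ ^ 2 with hGdef
  have hG0 : 0 ≤ G := by rw [hGdef]; positivity
  -- vector identity: y k - x k = t • (z k - y k)
  have hu : y k - x k = t • (z k - y k) := by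
    rw [hy k]
    match_scalars <;> field_simp <;> ring
  -- z update
  have hz1 : z (k + 1) - xstar = (1 - σ) • w + σ • v + (-(σ / μ)) • g := by
    rw [hz k, hwdef, hvdef, hgdef]
    match_scalars <;> (field_simp; try ring)
  have hZp : ‖z (k + 1) - xstar‖ ^ 2 = (1 - σ) ^ 2 * W + σ ^ 2 * V + (σ / μ) ^ 2 * G
      + 2 * (1 - σ) * σ * P - 2 * (1 - σ) * (σ / μ) * Qg - 2 * σ * (σ / μ) * R := by
    rw [hz1, norm_three]
    rw [hWdef, hVdef, hGdef, hPdef, hQdef, hRdef]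
    ring
  -- descent step
  have hA : f (x (k + 1)) ≤ f (y k) - s / 2 * G := by
    have hsm := smooth_upper f f' hgrad L hlip (y k) (x (k + 1))
    rw [← hgdef] at hsm
    have hxy : x (k + 1) - y k = (-s) • g := by
      rw [hx k, hgdef]; module
    rw [hxy, real_inner_smul_right, real_inner_self_eq_norm_sq, norm_smul,
      Real.norm_eq_abs, abs_neg, abs_of_pos hs0, mul_pow, ← hGdef] at hsm
    -- hsm : f (x (k+1)) ≤ f (y k) + -s * G + L / 2 * (s ^ 2 * G)
    nlinarith [hsm, hG0, mul_nonneg (mul_nonneg hG0 hs0.le) hs0.le]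
  -- strong convexity at y k vs x k
  have hvw : y k - z k = v - w := by rw [hvdef, hwdef]; abel
  have hxy2 : x k - y k = t • (v - w) := by
    have h2 : x k - y k = t • (y k - z k) := by
      rw [← neg_sub (y k) (x k), hu, ← smul_neg, neg_sub]
    rw [h2, hvw]
  have hB : f (y k) + t * (R - Qg) + μ / 2 * (t ^ 2 * (V - 2 * P + W)) ≤ f (x k) := by
    have hsl := strong_lower f μ hsc g (y k) (x k) (by rw [hgdef]; exact hgrad (y k))
    rw [hxy2, real_inner_smul_right, inner_sub_right, norm_smul, mul_pow, Real.norm_eq_abs, sq_abs] at hsl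
    have hnvw : ‖v - w‖ ^ 2 = V - 2 * P + W := by
      rw [norm_sub_sq_real v w, real_inner_comm w v, ← hPdef, ← hVdef, ← hWdef]
    have hgv : ⟪g, v⟫ = R := by rw [hRdef, real_inner_comm]
    have hgw : ⟪g, w⟫ = Qg := by rw [hQdef, real_inner_comm]
    rw [hnvw, hgv, hgw] at hsl
    linarith [hsl]
  -- strong convexity at y k vs xstar
  have hC : f (y k) - R + μ / 2 * V ≤ f xstar := by
    have hsl := strong_lower f μ hsc g (y k) xstar (by rw [hgdef]; exact hgrad (y k))
    have hxv : xstar - y k = -v := by rw [hvdef]; abel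
    have hgv : ⟪g, v⟫ = R := by rw [hRdef, real_inner_comm]
    rw [hxv, inner_neg_right, norm_neg, hgv, ← hVdef] at hsl
    linarith [hsl]
  have hE : f xstar ≤ f (y k) := hmin (y k)
  have hWPV : 0 ≤ W - 2 * P + V := by
    have : ‖w - v‖ ^ 2 = W - 2 * P + V := by
      rw [norm_sub_sq_real w v, ← hPdef, ← hVdef, ← hWdef]
    rw [← this]
    positivity
  have key := key_scalar σ ξ μ s (f (x k)) (f (y k)) (f xstar) (f (x (k + 1)))
    W V P Qg R G (‖z (k + 1) - xstar‖ ^ 2) hσ0 h1σ.le hξ hμ hμs'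
    (by exact hA) (by rw [hξσ]; exact hB) hC hE hWPV hZp
  -- convert to φ
  rw [hφ (k + 1), hφ k]
  have hc0 : (0:ℝ) < 1 - σ := h1σ
  have hzp : (0:ℝ) < (1 - σ) ^ (-(((k:ℕ) + 1) : ℤ)) := zpow_pos hc0 _
  have hexp : (1 - σ) ^ (-(((k + 1 : ℕ)) : ℤ)) * (1 - σ) = (1 - σ) ^ (-(k : ℤ)) := by
    rw [← zpow_add_one₀ (ne_of_gt hc0)]
    congr 1
    push_cast
    ring
  calc (1 - σ) ^ (-(((k + 1 : ℕ)) : ℤ)) *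
        (f (x (k + 1)) - f xstar + ξ * μ / 2 * ‖z (k + 1) - xstar‖ ^ 2)
      ≤ (1 - σ) ^ (-(((k + 1 : ℕ)) : ℤ)) *
        ((1 - σ) * (f (x k) - f xstar + ξ * μ / 2 * W)) := by
        apply mul_le_mul_of_nonneg_left key (zpow_pos hc0 _).le
    _ = (1 - σ) ^ (-(k : ℤ)) * (f (x k) - f xstar + ξ * μ / 2 * ‖z k - xstar‖ ^ 2) := by
        rw [← mul_assoc, mul_comm ((1 - σ) ^ (-(((k + 1 : ℕ)) : ℤ))) (1 - σ),
          mul_comm (1 - σ) ((1 - σ) ^ (-(((k + 1 : ℕ)) : ℤ))), hexp, hWdef]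
end
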